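/- Let W(u) = u²/2 - u⁶/30 and for h ∈ (0, √5/3) let α(h) ∈ (0, 5^{1/4}) be the unique root of W(u) = h in (0, 5^{1/4}), and define B̃₄(h) = (∫_{-α(h)}^{α(h)} u⁴ √(2(h - W(u))) du)/(∫_{-α(h)}^{α(h)} √(2(h - W(u))) du). Then B̃₄(h) → 5(2√3 + ln(26 - 15√3)) / (4 ln(2 - √3)) as h → (√5/3)⁻. -/

import Mathlib

/-!
Substituting `u = a t` with `W(a) = h` turns both Abelian integrals into `a^(k+1)` times
`∫_{-1}^{1} t^k √(2(W(a) - W(a t))) dt`, which depends continuously on `a`. As `h → d₄⁻` the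
turning point `α(h)` tends to the saddle `5^{1/4}`, because `W` is strictly increasing on
`[0, 5^{1/4}]`. At the saddle the radicand factors as `(√5/3) (1 - t²)² (t² + 2)`, and the two
limiting integrals are elementary: `P(t) √(t² + 2)` has the antiderivative
`Q(t) √(t² + 2) + c log(t + √(t² + 2))` for a suitable polynomial `Q` and constant `c`.
-/

open Real Polynomial Filter Topology Set intervalIntegral

section SqrtSqAdd

variable {k : ℝ}

lemma add_sqrt_sq_add_pos (hk : 0 < k) (t : ℝ) : 0 < t + √(t ^ 2 + k) := by
  have h : |t| < √(t ^ 2 + k) := by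
    rw [← sqrt_sq_eq_abs]
    exact sqrt_lt_sqrt (sq_nonneg t) (by linarith)
  linarith [neg_abs_le t]

lemma hasDerivAt_sqrt_sq_add (hk : 0 < k) (t : ℝ) :
    HasDerivAt (fun x => √(x ^ 2 + k)) (t / √(t ^ 2 + k)) t := by
  have h := ((hasDerivAt_pow 2 t).add_const k).sqrt (by positivity)
  exact h.congr_deriv (by push_cast; ring)

lemma hasDerivAt_log_add_sqrt_sq_add (hk : 0 < k) (t : ℝ) :
    HasDerivAt (fun x => log (x + √(x ^ 2 + k))) (√(t ^ 2 + k))⁻¹ t := by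
  have hpos := add_sqrt_sq_add_pos hk t
  refine (((hasDerivAt_id' t).add (hasDerivAt_sqrt_sq_add hk t)).log hpos.ne').congr_deriv ?_
  simp only [Pi.add_apply]
  field_simp
  ring

/-- The derivative of `Q(t) √(t² + k) + c log(t + √(t² + k))` is
`(Q'(t) (t² + k) + Q(t) t + c) / √(t² + k)`, so `hQ` makes it an antiderivative. -/
theorem integral_mul_sqrt_sq_add (hk : 0 < k) {P : ℝ → ℝ} (hP : Continuous P) (Q : ℝ[X])
    (c a b : ℝ)
    (hQ : ∀ t, Q.derivative.eval t * (t ^ 2 + k) + Q.eval t * t + c = P t * (t ^ 2 + k)) :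
    ∫ t in a..b, P t * √(t ^ 2 + k) =
      (Q.eval b * √(b ^ 2 + k) + c * log (b + √(b ^ 2 + k))) -
        (Q.eval a * √(a ^ 2 + k) + c * log (a + √(a ^ 2 + k))) := by
  have hderiv : ∀ t, HasDerivAt (fun x => Q.eval x * √(x ^ 2 + k) + c * log (x + √(x ^ 2 + k)))
      (P t * √(t ^ 2 + k)) t := by
    intro t
    have hsq : √(t ^ 2 + k) ^ 2 = t ^ 2 + k := sq_sqrt (by positivity)
    refine (((Q.hasDerivAt t).mul (hasDerivAt_sqrt_sq_add hk t)).add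
      ((hasDerivAt_log_add_sqrt_sq_add hk t).const_mul c)).congr_deriv ?_
    field_simp
    linear_combination (Q.derivative.eval t - P t) * hsq + hQ t
  exact integral_eq_sub_of_hasDerivAt (fun t _ => hderiv t)
    ((by fun_prop : Continuous fun t => P t * √(t ^ 2 + k)).intervalIntegrable _ _)

theorem integral_neg_one_one_mul_sqrt_sq_add_two {P : ℝ → ℝ} (hP : Continuous P) (Q : ℝ[X])
    (c : ℝ) (hQ : ∀ t, Q.derivative.eval t * (t ^ 2 + 2) + Q.eval t * t + c = P t * (t ^ 2 + 2))
    (hodd : Q.eval (-1) = -Q.eval 1) :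
    ∫ t in (-1 : ℝ)..1, P t * √(t ^ 2 + 2) = 2 * Q.eval 1 * √3 + c * log (2 + √3) := by
  have h3 : √3 ^ 2 = 3 := sq_sqrt (by norm_num)
  have hlog : log (1 + √3) = log (2 + √3) + log (-1 + √3) := by
    rw [← log_mul (by positivity) (by nlinarith)]
    congr 1
    linear_combination -h3
  rw [integral_mul_sqrt_sq_add two_pos hP Q c _ _ hQ, hodd]
  norm_num [hlog]
  ring

end SqrtSqAdd

noncomputable def W₄ (u : ℝ) : ℝ := u ^ 2 / 2 - u ^ 6 / 30

noncomputable def saddle₄ : ℝ := 5 ^ (1 / 4 : ℝ)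

lemma saddle₄_sq : saddle₄ ^ 2 = √5 := by
  rw [saddle₄, ← rpow_natCast, ← rpow_mul (by norm_num), sqrt_eq_rpow]
  norm_num

lemma saddle₄_pow_four : saddle₄ ^ 4 = 5 := by
  rw [saddle₄, ← rpow_natCast, ← rpow_mul (by norm_num)]
  norm_num

lemma saddle₄_pow_six : saddle₄ ^ 6 = 5 * √5 := by
  rw [show saddle₄ ^ 6 = saddle₄ ^ 4 * saddle₄ ^ 2 by ring, saddle₄_pow_four, saddle₄_sq]

lemma W₄_saddle₄ : W₄ saddle₄ = √5 / 3 := by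
  rw [W₄, saddle₄_pow_six, saddle₄_sq]
  ring

lemma hasDerivAt_W₄ (x : ℝ) : HasDerivAt W₄ (x - x ^ 5 / 5) x :=
  (((hasDerivAt_pow 2 x).div_const 2).sub ((hasDerivAt_pow 6 x).div_const 30)).congr_deriv
    (by push_cast; ring)

lemma strictMonoOn_W₄ : StrictMonoOn W₄ (Icc 0 saddle₄) := by
  refine strictMonoOn_of_deriv_pos (convex_Icc _ _)
    (fun x _ => (hasDerivAt_W₄ x).continuousAt.continuousWithinAt) fun x hx => ?_
  rw [interior_Icc] at hx
  have hx4 : x ^ 4 < 5 := saddle₄_pow_four ▸ pow_lt_pow_left₀ hx.2 hx.1.le (by norm_num)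
  rw [(hasDerivAt_W₄ x).deriv]
  nlinarith [hx.1]

lemma two_mul_W₄_saddle₄_sub (t : ℝ) :
    2 * (W₄ saddle₄ - W₄ (saddle₄ * t)) = √5 / 3 * ((1 - t ^ 2) ^ 2 * (t ^ 2 + 2)) := by
  rw [W₄_saddle₄, W₄, mul_pow, mul_pow, saddle₄_pow_six, saddle₄_sq]
  ring

lemma sqrt_two_mul_W₄_saddle₄_sub {t : ℝ} (ht : t ∈ uIcc (-1) 1) :
    √(2 * (W₄ saddle₄ - W₄ (saddle₄ * t))) = √(√5 / 3) * ((1 - t ^ 2) * √(t ^ 2 + 2)) := by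
  rw [uIcc_of_le (by norm_num)] at ht
  have ht2 : 0 ≤ 1 - t ^ 2 := by nlinarith [ht.1, ht.2]
  rw [two_mul_W₄_saddle₄_sub, sqrt_mul (by positivity), sqrt_mul (by positivity),
    sqrt_sq ht2]

/-- `∫_{-1}^{1} t^k √(2(W(a) - W(a t))) dt`: the Abelian integral `∮ u^k v du` over the orbit
through `(a, 0)`, halved and rescaled to the interval `[-1, 1]`. -/
noncomputable def scaledMoment (k : ℕ) (a : ℝ) : ℝ :=
  ∫ t in (-1 : ℝ)..1, t ^ k * √(2 * (W₄ a - W₄ (a * t)))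

lemma continuous_scaledMoment (k : ℕ) : Continuous (scaledMoment k) :=
  continuous_parametric_intervalIntegral_of_continuous' (by unfold W₄; fun_prop) _ _

lemma integral_pow_mul_sqrt_eq_scaledMoment (k : ℕ) {a h : ℝ} (ha : W₄ a = h) :
    ∫ u in (-a)..a, u ^ k * √(2 * (h - W₄ u)) = a ^ (k + 1) * scaledMoment k a := by
  have hsub := mul_integral_comp_mul_left (a := -1) (b := 1)
    (f := fun u => u ^ k * √(2 * (W₄ a - W₄ u))) a
  rw [mul_neg, mul_one] at hsub
  rw [scaledMoment, pow_succ', mul_assoc, ← integral_const_mul, ← ha, ← hsub]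
  simp only [mul_pow, mul_assoc]

lemma scaledMoment_zero_saddle₄ :
    scaledMoment 0 saddle₄ = √(√5 / 3) * (3 / 2 * log (2 + √3)) := by
  have hI : ∫ t in (-1 : ℝ)..1, (1 - t ^ 2) * √(t ^ 2 + 2) = 3 / 2 * log (2 + √3) := by
    rw [integral_neg_one_one_mul_sqrt_sq_add_two (by fun_prop)
      (C (1 / 4) * X - C (1 / 4) * X ^ 3) (3 / 2) (fun t => by simp; ring) (by norm_num)]
    simp
  rw [scaledMoment, ← hI, ← integral_const_mul]
  exact integral_congr fun t ht => by simp only [pow_zero, one_mul, sqrt_two_mul_W₄_saddle₄_sub ht]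

lemma scaledMoment_four_saddle₄ :
    scaledMoment 4 saddle₄ = √(√5 / 3) * (-(3 / 4) * √3 + 9 / 8 * log (2 + √3)) := by
  have hI : ∫ t in (-1 : ℝ)..1, t ^ 4 * (1 - t ^ 2) * √(t ^ 2 + 2) =
      -(3 / 4) * √3 + 9 / 8 * log (2 + √3) := by
    rw [integral_neg_one_one_mul_sqrt_sq_add_two (by fun_prop)
      (-C (1 / 8) * X ^ 7 + C (1 / 8) * X ^ 5 + C (3 / 16) * X ^ 3 - C (9 / 16) * X) (9 / 8)
      (fun t => by simp; ring) (by simp; ring)]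
    norm_num
  rw [scaledMoment, ← hI, ← integral_const_mul]
  exact integral_congr fun t ht => by simp only [sqrt_two_mul_W₄_saddle₄_sub ht]; ring

lemma scaledMoment_zero_saddle₄_pos : 0 < scaledMoment 0 saddle₄ := by
  rw [scaledMoment_zero_saddle₄]
  have := log_pos (by linarith [sqrt_nonneg 3] : (1 : ℝ) < 2 + √3)
  positivity

lemma limit_eq_scaledMoment_ratio :
    5 * (2 * √3 + log (26 - 15 * √3)) / (4 * log (2 - √3)) =
      saddle₄ ^ 4 * scaledMoment 4 saddle₄ / scaledMoment 0 saddle₄ := by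
  have h3 : √3 ^ 2 = 3 := sq_sqrt (by norm_num)
  have hinv : log (2 - √3) = -log (2 + √3) := by
    rw [← log_inv]
    exact congrArg log (eq_inv_of_mul_eq_one_left (by linear_combination -h3))
  have hcube : (26 : ℝ) - 15 * √3 = (2 - √3) ^ 3 := by linear_combination (√3 - 6) * h3
  have hL : 0 < log (2 + √3) := log_pos (by linarith [sqrt_nonneg 3])
  have hc : 0 < √(√5 / 3) := sqrt_pos.2 (by positivity)
  rw [saddle₄_pow_four, scaledMoment_four_saddle₄, scaledMoment_zero_saddle₄, hcube, log_pow,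
    hinv]
  field_simp
  ring

theorem tendsto_nhdsLT_of_strictMonoOn {f g : ℝ → ℝ} {a c : ℝ} (hf : StrictMonoOn f (Icc a c))
    (hg : ∀ᶠ y in 𝓝[<] (f c), g y ∈ Ioo a c ∧ f (g y) = y) :
    Tendsto g (𝓝[<] (f c)) (𝓝 c) := by
  refine tendsto_order.2 ⟨fun b hb => ?_, fun b hb => hg.mono fun y hy => hy.1.2.trans hb⟩
  rcases lt_or_ge b a with hba | hab
  · exact hg.mono fun y hy => hba.trans hy.1.1
  · have hfb : f b < f c := hf ⟨hab, hb.le⟩ ⟨hab.trans hb.le, le_rfl⟩ hb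
    filter_upwards [hg, Ioo_mem_nhdsLT hfb] with y ⟨hgy, hfgy⟩ hy
    by_contra! hle
    have := hf.monotoneOn ⟨hgy.1.le, hgy.2.le⟩ ⟨hab, hb.le⟩ hle
    linarith [hy.1]

/-- For `n = 4` (`W(u) = u²/2 - u⁶/30`), the ratio of Abelian
integrals `B̃₄(h)` tends to `5(2√3 + ln(26 - 15√3)) / (4 ln(2 - √3))` as
`h → (√5/3)⁻`. -/
theorem B4_limit_at_saddle (W : ℝ → ℝ)
    (hW : ∀ u : ℝ, W u = u ^ 2 / 2 - u ^ 6 / 30)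
    (α : ℝ → ℝ)
    (hα : ∀ h ∈ Set.Ioo (0 : ℝ) (Real.sqrt 5 / 3),
      α h ∈ Set.Ioo 0 ((5 : ℝ) ^ ((1 : ℝ) / 4)) ∧ W (α h) = h)
    (B : ℝ → ℝ)
    (hB : ∀ h : ℝ, B h =
      (∫ u in (-α h)..(α h), u ^ 4 * Real.sqrt (2 * (h - W u))) /
      (∫ u in (-α h)..(α h), Real.sqrt (2 * (h - W u)))) :
    Filter.Tendsto B
      (nhdsWithin (Real.sqrt 5 / 3) (Set.Iio (Real.sqrt 5 / 3)))
      (nhds (5 * (2 * Real.sqrt 3 + Real.log (26 - 15 * Real.sqrt 3)) /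
        (4 * Real.log (2 - Real.sqrt 3)))) := by
  obtain rfl : W = W₄ := funext hW
  rw [← W₄_saddle₄] at hα ⊢
  have hα' : ∀ᶠ h in 𝓝[<] (W₄ saddle₄), α h ∈ Ioo 0 saddle₄ ∧ W₄ (α h) = h := by
    filter_upwards [Ioo_mem_nhdsLT (by rw [W₄_saddle₄]; positivity)] using hα
  have hB' : B =ᶠ[𝓝[<] (W₄ saddle₄)]
      fun h => α h ^ 4 * scaledMoment 4 (α h) / scaledMoment 0 (α h) := by
    filter_upwards [hα'] with h ⟨hαh, hWα⟩
    have h0 := integral_pow_mul_sqrt_eq_scaledMoment 0 hWα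
    simp only [pow_zero, one_mul, zero_add, pow_one] at h0
    rw [hB, integral_pow_mul_sqrt_eq_scaledMoment 4 hWα, h0, pow_succ, mul_right_comm,
      mul_comm (α h) (scaledMoment 0 _), mul_div_mul_right _ _ hαh.1.ne']
  have hcont : ContinuousAt (fun a => a ^ 4 * scaledMoment 4 a / scaledMoment 0 a) saddle₄ :=
    ((continuous_pow 4).mul (continuous_scaledMoment 4)).continuousAt.div
      (continuous_scaledMoment 0).continuousAt scaledMoment_zero_saddle₄_pos.ne'
  rw [limit_eq_scaledMoment_ratio]
  exact (hcont.tendsto.comp (tendsto_nhdsLT_of_strictMonoOn strictMonoOn_W₄ hα')).congr' hB'.symm
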